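/- Assume (B,L) is a Hadamard pair. Then: (i) the closure of any L-invariant set is L-invariant; (ii) every B-extreme L-cycle is an L-invariant set; (iii) for any minimal closed L-invariant set M and any x ∈ M, M equals the closure of the orbit O(x), and M is contained in the attractor X_L of the IFS (τ_l)_{l∈L}; (iv) the family of minimal closed L-invariant sets is finite, its members are pairwise separated, and it is complete. -/

import Mathlib

open Complex Filter Topology

noncomputable section

def expv {d : ℕ} (t x : Fin d → ℝ) : ℂ :=
  Complex.exp (2 * Real.pi * Complex.I * (∑ i, t i * x i))

def Rmat {d : ℕ} (R : Matrix (Fin d) (Fin d) ℤ) : Matrix (Fin d) (Fin d) ℝ :=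
  R.map Int.cast

def vecR {d : ℕ} (b : Fin d → ℤ) : Fin d → ℝ := fun i => (b i : ℝ)

def tauL {d : ℕ} (R : Matrix (Fin d) (Fin d) ℤ) (l : Fin d → ℤ) (x : Fin d → ℝ) :
    Fin d → ℝ :=
  ((Rmat R).transpose)⁻¹.mulVec (x + vecR l)

def Expansive {d : ℕ} (R : Matrix (Fin d) (Fin d) ℤ) : Prop :=
  ∀ z : ℂ, (R.map (Int.cast : ℤ → ℂ)).charpoly.IsRoot z → 1 < ‖z‖

def chiB {d : ℕ} (B : Finset (Fin d → ℤ)) (x : Fin d → ℝ) : ℂ :=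
  (B.card : ℂ)⁻¹ * ∑ b ∈ B, expv (vecR b) x

def hadMat {d : ℕ} (R : Matrix (Fin d) (Fin d) ℤ) (B L : Finset (Fin d → ℤ)) :
    Matrix B L ℂ :=
  fun b l => ((Real.sqrt (B.card) : ℝ) : ℂ)⁻¹ *
    expv ((Rmat R)⁻¹.mulVec (vecR (b : Fin d → ℤ))) (vecR (l : Fin d → ℤ))

def IsHadamardPair {d : ℕ} (R : Matrix (Fin d) (Fin d) ℤ)
    (B L : Finset (Fin d → ℤ)) : Prop :=
  (hadMat R B L).conjTranspose * hadMat R B L = 1 ∧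
    hadMat R B L * (hadMat R B L).conjTranspose = 1

def IsLCycle {d : ℕ} (R : Matrix (Fin d) (Fin d) ℤ) (L : Finset (Fin d → ℤ))
    (C : Set (Fin d → ℝ)) : Prop :=
  ∃ p : ℕ, ∃ x : Fin (p + 1) → (Fin d → ℝ), ∃ l : Fin (p + 1) → (Fin d → ℤ),
    Function.Injective x ∧ (∀ i, l i ∈ L) ∧
    (∀ i, tauL R (l i) (x i) = x (i + 1)) ∧ C = Set.range x

def BExtreme {d : ℕ} (B : Finset (Fin d → ℤ)) (C : Set (Fin d → ℝ)) : Prop :=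
  ∀ x ∈ C, ‖chiB B x‖ = 1

/-- `M` is `L`-invariant: possible transitions starting in `M` stay in `M`. -/
def LInvariant {d : ℕ} (R : Matrix (Fin d) (Fin d) ℤ) (B L : Finset (Fin d → ℤ))
    (M : Set (Fin d → ℝ)) : Prop :=
  ∀ x ∈ M, ∀ l ∈ L, chiB B (tauL R l x) ≠ 0 → tauL R l x ∈ M

/-- The orbit `O(x)`: all points reachable from `x` by finitely many possible
transitions. -/
def orbitO {d : ℕ} (R : Matrix (Fin d) (Fin d) ℤ) (B L : Finset (Fin d → ℤ))
    (x : Fin d → ℝ) : Set (Fin d → ℝ) :=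
  {y | ∃ n : ℕ, ∃ z : Fin (n + 1) → (Fin d → ℝ), z 0 = x ∧ z (Fin.last n) = y ∧
    ∀ i : Fin n, ∃ l ∈ L,
      tauL R l (z i.castSucc) = z i.succ ∧ chiB B (z i.succ) ≠ 0}

/-- A minimal (nonempty) closed `L`-invariant set. -/
def IsMinimalInv {d : ℕ} (R : Matrix (Fin d) (Fin d) ℤ) (B L : Finset (Fin d → ℤ))
    (M : Set (Fin d → ℝ)) : Prop :=
  M.Nonempty ∧ IsClosed M ∧ LInvariant R B L M ∧
    ∀ M' ⊆ M, M'.Nonempty → IsClosed M' → LInvariant R B L M' → M' = M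

/-- Two sets are separated when they are at positive `dist'`-distance. -/
def SepSets {d : ℕ} (dist' : (Fin d → ℝ) → (Fin d → ℝ) → ℝ)
    (M₁ M₂ : Set (Fin d → ℝ)) : Prop :=
  ∃ δ > 0, ∀ x ∈ M₁, ∀ y ∈ M₂, δ ≤ dist' x y


/-!
The Hadamard condition says that `(χ_B(τ_l x))_{l ∈ L}` is the image of a unit vector under a
unitary matrix, so `∑_l |χ_B(τ_l x)|² = 1`. Hence some transition is possible at every point, and
on a `B`-extreme cycle only the cycle's own transition is.

What remains is a statement about a system of contractions `τ_l`, each applicable on the open set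
`{χ_B ∘ τ_l ≠ 0}`, these sets covering the space. A step of the system contracts the distance from
a closed invariant set `M` to the attractor `X_L`, so `M` meets `X_L`; a minimal `M` therefore lies
in `X_L`, and Zorn's lemma inside `M ∩ X_L` gives completeness. If `δ` is a Lebesgue number of the
cover on `X_L`, two disjoint compact invariant sets are at distance at least `δ`: a closest pair
nearer than `δ` could be moved by a common `τ_l` and would get closer still. By compactness of
`X_L` there are only finitely many `δ`-separated minimal sets.
-/

open Set Metric Matrix

section ContractingSystem

variable {X ι : Type*} [MetricSpace X] {τ : ι → X → X} {L : Set ι} {c : ℝ}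

theorem nonempty_inter_of_contracting {K M : Set X} (hK : IsCompact K) (hKne : K.Nonempty)
    (hKτ : ∀ l ∈ L, MapsTo (τ l) K K) (hc0 : 0 ≤ c) (hc1 : c < 1)
    (hτ : ∀ l ∈ L, ∀ x y, dist (τ l x) (τ l y) ≤ c * dist x y)
    (hM : IsClosed M) (hMne : M.Nonempty) (hMτ : ∀ x ∈ M, ∃ l ∈ L, τ l x ∈ M) :
    (M ∩ K).Nonempty := by
  obtain ⟨w, hwK, hw⟩ := hK.exists_isMinOn hKne (continuous_infDist_pt M).continuousOn
  -- the distance from `M` to `K`, attained at `w`, is contracted by one step of the system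
  have hcontract : ∀ ε > 0, infDist w M ≤ c * infDist w M + ε := by
    intro ε hε
    obtain ⟨a, haM, ha⟩ := (infDist_lt_iff hMne).1 (lt_add_of_pos_right (infDist w M) hε)
    obtain ⟨l, hl, hla⟩ := hMτ a haM
    calc infDist w M ≤ infDist (τ l w) M := hw (hKτ l hl hwK)
      _ ≤ dist (τ l w) (τ l a) := infDist_le_dist_of_mem hla
      _ ≤ c * dist w a := hτ l hl w a
      _ ≤ c * infDist w M + ε := by nlinarith
  have hzero : infDist w M = 0 := by
    have := le_of_forall_pos_le_add hcontract
    nlinarith [infDist_nonneg (x := w) (s := M)]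
  exact ⟨w, (hM.mem_iff_infDist_zero hMne).2 hzero, hwK⟩

theorem exists_pos_le_dist_of_invariant {K : Set X} (hK : IsCompact K) {U : ι → Set X}
    (hU : ∀ l, IsOpen (U l)) (hKU : ∀ x ∈ K, ∃ l ∈ L, x ∈ U l) (hc1 : c < 1)
    (hτ : ∀ l ∈ L, ∀ x y, dist (τ l x) (τ l y) ≤ c * dist x y) :
    ∃ δ > 0, ∀ M₁ M₂ : Set X, IsCompact M₁ → IsCompact M₂ → M₁ ⊆ K → Disjoint M₁ M₂ →
      (∀ x ∈ M₁, ∀ l ∈ L, x ∈ U l → τ l x ∈ M₁) → (∀ x ∈ M₂, ∀ l ∈ L, x ∈ U l → τ l x ∈ M₂) →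
      ∀ x ∈ M₁, ∀ y ∈ M₂, δ ≤ dist x y := by
  obtain ⟨δ, hδ, hball⟩ := lebesgue_number_lemma_of_metric hK (c := fun l : L => U l)
    (fun l => hU l) fun x hx => by
      obtain ⟨l, hl, hxl⟩ := hKU x hx
      exact mem_iUnion.2 ⟨⟨l, hl⟩, hxl⟩
  refine ⟨δ, hδ, fun M₁ M₂ h₁ h₂ hK₁ hdisj hinv₁ hinv₂ x hx y hy => ?_⟩
  obtain ⟨⟨a, b⟩, ⟨ha, hb⟩, hmin⟩ :=
    (h₁.prod h₂).exists_isMinOn ⟨(x, y), hx, hy⟩ continuous_dist.continuousOn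
  refine le_trans ?_ (hmin (mk_mem_prod hx hy))
  -- a closest pair `(a, b)` that is `δ`-close can be moved by a common map `τ l`, getting closer
  by_contra! hab
  obtain ⟨⟨l, hl⟩, hlU⟩ := hball a (hK₁ ha)
  have hpos : 0 < dist a b := dist_pos.2 (hdisj.ne_of_mem ha hb)
  have hle : dist a b ≤ dist (τ l a) (τ l b) :=
    hmin (mk_mem_prod (hinv₁ a ha l hl (hlU (mem_ball_self hδ)))
      (hinv₂ b hb l hl (hlU (mem_ball'.2 hab))))
  nlinarith [hτ l hl a b]

theorem IsCompact.finite_of_forall_le_dist {K : Set X} (hK : IsCompact K) {S : Set (Set X)}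
    (hS : ∀ M ∈ S, M.Nonempty ∧ M ⊆ K) {δ : ℝ} (hδ : 0 < δ)
    (hsep : ∀ M₁ ∈ S, ∀ M₂ ∈ S, M₁ ≠ M₂ → ∀ x ∈ M₁, ∀ y ∈ M₂, δ ≤ dist x y) : S.Finite := by
  rcases S.eq_empty_or_nonempty with rfl | ⟨M₀, hM₀⟩
  · exact finite_empty
  have : Nonempty X := (hS M₀ hM₀).1.nonempty
  obtain ⟨t, -, ht, hKt⟩ := hK.finite_cover_balls (half_pos hδ)
  choose! p hp using fun M hM => (hS M hM).1
  choose! g hgt hg using fun M hM => mem_iUnion₂.1 (hKt ((hS M hM).2 (hp M hM)))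
  refine Finite.of_injOn (f := g) (fun M hM => hgt M hM) (fun M₁ h₁ M₂ h₂ heq => ?_) ht
  by_contra hne
  have h₁' := mem_ball.1 (hg M₁ h₁)
  have h₂' := mem_ball'.1 (hg M₂ h₂)
  rw [heq] at h₁'
  linarith [hsep M₁ h₁ M₂ h₂ hne _ (hp M₁ h₁) _ (hp M₂ h₂), dist_triangle (p M₁) (g M₂) (p M₂)]

end ContractingSystem

theorem Matrix.sum_normSq_vecMul_of_mul_conjTranspose_eq_one {m n : Type*} [Fintype m]
    [DecidableEq m] [Fintype n] {H : Matrix m n ℂ} (hH : H * Hᴴ = 1) (v : m → ℂ) :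
    ∑ j, Complex.normSq ((v ᵥ* H) j) = ∑ i, Complex.normSq (v i) := by
  have key : (v ᵥ* H) ⬝ᵥ star (v ᵥ* H) = v ⬝ᵥ star v := by
    rw [star_vecMul, dotProduct_mulVec, vecMul_vecMul, hH, vecMul_one]
  simp only [dotProduct, Pi.star_apply, RCLike.star_def, Complex.mul_conj] at key
  exact_mod_cast key

section Fourier

variable {d : ℕ}

theorem continuous_tauL (R : Matrix (Fin d) (Fin d) ℤ) (l : Fin d → ℤ) :
    Continuous (tauL R l) := by
  unfold tauL; fun_prop

theorem continuous_chiB (B : Finset (Fin d → ℤ)) : Continuous (chiB B) := by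
  unfold chiB expv; fun_prop

theorem norm_expv (t x : Fin d → ℝ) : ‖expv t x‖ = 1 := by
  simp [expv, Complex.norm_exp]

theorem expv_add (t x y : Fin d → ℝ) : expv t (x + y) = expv t x * expv t y := by
  simp only [expv, ← Complex.exp_add]
  congr 1
  simp only [Pi.add_apply, mul_add, Finset.sum_add_distrib]
  push_cast
  ring

theorem expv_tauL (R : Matrix (Fin d) (Fin d) ℤ) (b l : Fin d → ℤ) (x : Fin d → ℝ) :
    expv (vecR b) (tauL R l x) =
      expv ((Rmat R)⁻¹ *ᵥ vecR b) x * expv ((Rmat R)⁻¹ *ᵥ vecR b) (vecR l) := by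
  have hdot : vecR b ⬝ᵥ tauL R l x = ((Rmat R)⁻¹ *ᵥ vecR b) ⬝ᵥ (x + vecR l) := by
    rw [tauL, dotProduct_mulVec, ← transpose_nonsing_inv, vecMul_transpose]
  rw [← expv_add]
  exact congrArg (fun s : ℝ => Complex.exp (2 * Real.pi * Complex.I * s)) hdot

theorem chiB_tauL_eq_vecMul_hadMat (R : Matrix (Fin d) (Fin d) ℤ) (B L : Finset (Fin d → ℤ))
    (x : Fin d → ℝ) (l : L) :
    chiB B (tauL R l x) =
      ((fun b : B => ((√(B.card : ℝ) : ℝ) : ℂ)⁻¹ * expv ((Rmat R)⁻¹ *ᵥ vecR b) x) ᵥ*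
        hadMat R B L) l := by
  have hN : ((B.card : ℝ) : ℂ)⁻¹ =
      ((√(B.card : ℝ) : ℝ) : ℂ)⁻¹ * ((√(B.card : ℝ) : ℝ) : ℂ)⁻¹ := by
    rw [← mul_inv, ← Complex.ofReal_mul, Real.mul_self_sqrt (Nat.cast_nonneg _)]
  simp only [chiB, vecMul, dotProduct, hadMat, expv_tauL]
  rw [← Finset.sum_coe_sort B, Finset.mul_sum]
  refine Finset.sum_congr rfl fun b _ => ?_
  rw [show (B.card : ℂ) = ((B.card : ℝ) : ℂ) by norm_cast, hN]
  ring

end Fourier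

section Hadamard

variable {d : ℕ} {R : Matrix (Fin d) (Fin d) ℤ} {B L : Finset (Fin d → ℤ)}

theorem IsHadamardPair.sum_normSq_chiB_tauL (hHad : IsHadamardPair R B L)
    (hB0 : (0 : Fin d → ℤ) ∈ B) (x : Fin d → ℝ) :
    ∑ l ∈ L, normSq (chiB B (tauL R l x)) = 1 := by
  have hN : (B.card : ℝ) ≠ 0 := Nat.cast_ne_zero.2 (Finset.card_ne_zero_of_mem hB0)
  rw [← Finset.sum_coe_sort L]
  simp only [chiB_tauL_eq_vecMul_hadMat]
  rw [sum_normSq_vecMul_of_mul_conjTranspose_eq_one hHad.2]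
  simp only [map_mul, normSq_eq_norm_sq, norm_expv, norm_inv, norm_real, Real.norm_eq_abs,
    abs_of_nonneg (Real.sqrt_nonneg _), inv_pow, Real.sq_sqrt (Nat.cast_nonneg _), one_pow,
    mul_one, Finset.sum_const, Finset.card_univ, Fintype.card_coe, nsmul_eq_mul]
  exact mul_inv_cancel₀ hN

theorem IsHadamardPair.exists_chiB_tauL_ne_zero (hHad : IsHadamardPair R B L)
    (hB0 : (0 : Fin d → ℤ) ∈ B) (x : Fin d → ℝ) : ∃ l ∈ L, chiB B (tauL R l x) ≠ 0 := by
  by_contra! h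
  have hsum := hHad.sum_normSq_chiB_tauL hB0 x
  rw [Finset.sum_eq_zero fun l hl => by rw [h l hl, map_zero]] at hsum
  exact zero_ne_one hsum

end Hadamard

section InvariantSets

variable {d : ℕ} {R : Matrix (Fin d) (Fin d) ℤ} {B L : Finset (Fin d → ℤ)}

theorem isOpen_setOf_chiB_tauL_ne_zero (R : Matrix (Fin d) (Fin d) ℤ) (B : Finset (Fin d → ℤ))
    (l : Fin d → ℤ) : IsOpen {x | chiB B (tauL R l x) ≠ 0} :=
  isOpen_ne.preimage ((continuous_chiB B).comp (continuous_tauL R l))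

theorem LInvariant.inter {M K : Set (Fin d → ℝ)} (hM : LInvariant R B L M)
    (hK : LInvariant R B L K) : LInvariant R B L (M ∩ K) :=
  fun x hx l hl h => ⟨hM x hx.1 l hl h, hK x hx.2 l hl h⟩

theorem LInvariant.closure {M : Set (Fin d → ℝ)} (hM : LInvariant R B L M) :
    LInvariant R B L (closure M) := by
  intro x hx l hl hpos
  set U := {y | chiB B (tauL R l y) ≠ 0}
  have hx' : x ∈ _root_.closure (U ∩ M) :=
    (isOpen_setOf_chiB_tauL_ne_zero R B l).inter_closure ⟨hpos, hx⟩
  exact closure_mono (image_subset_iff.2 fun y hy => hM y hy.2 l hl hy.1)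
    (image_closure_subset_closure_image (continuous_tauL R l) ⟨x, hx', rfl⟩)

-- On a `B`-extreme cycle the cycle's own transition already carries the whole mass
-- `∑ l, |χ_B(τ_l x)|² = 1`, so every other transition is impossible.
theorem IsLCycle.lInvariant (hHad : IsHadamardPair R B L) (hB0 : (0 : Fin d → ℤ) ∈ B)
    {C : Set (Fin d → ℝ)} (hC : IsLCycle R L C) (hCB : BExtreme B C) : LInvariant R B L C := by
  obtain ⟨p, x, l, -, hlL, hstep, rfl⟩ := hC
  rintro _ ⟨i, rfl⟩ l' hl' hpos
  obtain rfl | hne := eq_or_ne l' (l i)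
  · exact ⟨i + 1, (hstep i).symm⟩
  have hcycle : normSq (chiB B (tauL R (l i) (x i))) = 1 := by
    rw [hstep, normSq_eq_norm_sq, hCB _ ⟨_, rfl⟩, one_pow]
  have hpair : normSq (chiB B (tauL R (l i) (x i))) + normSq (chiB B (tauL R l' (x i))) ≤ 1 := by
    have := Finset.sum_le_sum_of_subset_of_nonneg
      (f := fun l => normSq (chiB B (tauL R l (x i))))
      (Finset.insert_subset (hlL i) (Finset.singleton_subset_iff.2 hl'))
      fun _ _ _ => normSq_nonneg _
    rwa [Finset.sum_pair hne.symm, hHad.sum_normSq_chiB_tauL hB0 (x i)] at this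
  have hzero : normSq (chiB B (tauL R l' (x i))) = 0 :=
    le_antisymm (by linarith) (normSq_nonneg _)
  exact (hpos (normSq_eq_zero.1 hzero)).elim

theorem mem_orbitO_self (x : Fin d → ℝ) : x ∈ orbitO R B L x :=
  ⟨0, fun _ => x, rfl, rfl, fun i => i.elim0⟩

theorem orbitO_subset {M : Set (Fin d → ℝ)} (hM : LInvariant R B L M) {x : Fin d → ℝ}
    (hx : x ∈ M) : orbitO R B L x ⊆ M := by
  rintro _ ⟨n, z, rfl, rfl, hz⟩
  suffices ∀ i, z i ∈ M from this _
  intro i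
  induction i using Fin.induction with
  | zero => exact hx
  | succ i ih =>
    obtain ⟨l, hl, hzi, hpos⟩ := hz i
    rw [← hzi] at hpos ⊢
    exact hM _ ih l hl hpos

theorem lInvariant_orbitO (x : Fin d → ℝ) : LInvariant R B L (orbitO R B L x) := by
  rintro _ ⟨n, z, hz0, rfl, hz⟩ l hl hpos
  refine ⟨n + 1, Fin.snoc z (tauL R l (z (Fin.last n))), ?_, Fin.snoc_last _ _, fun i => ?_⟩
  · rw [← Fin.castSucc_zero, Fin.snoc_castSucc, hz0]
  induction i using Fin.lastCases with
  | last => exact ⟨l, hl, by simp, by simpa⟩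
  | cast i =>
    obtain ⟨l', hl', hzi, hpos'⟩ := hz i
    refine ⟨l', hl', ?_, ?_⟩ <;>
      simpa only [Fin.succ_castSucc, Fin.snoc_castSucc]

theorem IsMinimalInv.subset_of_inter_nonempty {M K : Set (Fin d → ℝ)}
    (hM : IsMinimalInv R B L M) (hK : IsClosed K) (hKinv : LInvariant R B L K)
    (hMK : (M ∩ K).Nonempty) : M ⊆ K := by
  rw [← hM.2.2.2 _ inter_subset_left hMK (hM.2.1.inter hK) (hM.2.2.1.inter hKinv)]
  exact inter_subset_right

theorem IsMinimalInv.disjoint {M₁ M₂ : Set (Fin d → ℝ)} (h₁ : IsMinimalInv R B L M₁)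
    (h₂ : IsMinimalInv R B L M₂) (hne : M₁ ≠ M₂) : Disjoint M₁ M₂ := by
  rw [disjoint_iff_inter_eq_empty, ← not_nonempty_iff_eq_empty]
  intro h
  exact hne ((h₁.subset_of_inter_nonempty h₂.2.1 h₂.2.2.1 h).antisymm
    (h₂.subset_of_inter_nonempty h₁.2.1 h₁.2.2.1 (inter_comm M₁ M₂ ▸ h)))

theorem IsMinimalInv.eq_closure_orbitO {M : Set (Fin d → ℝ)} (hM : IsMinimalInv R B L M)
    {x : Fin d → ℝ} (hx : x ∈ M) : M = closure (orbitO R B L x) :=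
  (hM.2.2.2 _ (closure_minimal (orbitO_subset hM.2.2.1 hx) hM.2.1)
    ⟨x, subset_closure (mem_orbitO_self x)⟩ isClosed_closure
    (lInvariant_orbitO x).closure).symm

theorem exists_isMinimalInv_subset {K : Set (Fin d → ℝ)} (hK : IsCompact K)
    (hKne : K.Nonempty) (hKinv : LInvariant R B L K) : ∃ M ⊆ K, IsMinimalInv R B L M := by
  set S := {M | M ⊆ K ∧ M.Nonempty ∧ IsClosed M ∧ LInvariant R B L M}
  have hchain : ∀ C ⊆ S, IsChain (· ⊆ ·) C → C.Nonempty → ∃ lb ∈ S, ∀ M ∈ C, lb ⊆ M := by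
    intro C hCS hC ⟨M₀, hM₀⟩
    have : Nonempty C := ⟨⟨M₀, hM₀⟩⟩
    refine ⟨⋂₀ C, ⟨(sInter_subset_of_mem hM₀).trans (hCS hM₀).1, ?_, ?_, ?_⟩,
      fun M hM => sInter_subset_of_mem hM⟩
    · exact IsCompact.nonempty_sInter_of_directed_nonempty_isCompact_isClosed
        (fun s hs t ht => (hC.total hs ht).elim (fun h => ⟨s, hs, subset_rfl, h⟩)
          fun h => ⟨t, ht, h, subset_rfl⟩) (fun M hM => (hCS hM).2.1)
        (fun M hM => hK.of_isClosed_subset (hCS hM).2.2.1 (hCS hM).1)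
        fun M hM => (hCS hM).2.2.1
    · exact isClosed_sInter fun M hM => (hCS hM).2.2.1
    · exact fun x hx l hl hpos => mem_sInter.2 fun M hM =>
        (hCS hM).2.2.2 x (hx M hM) l hl hpos
  obtain ⟨M, hMK, hmin⟩ :=
    zorn_superset_nonempty S hchain K ⟨subset_rfl, hKne, hK.isClosed, hKinv⟩
  exact ⟨M, hMK, hmin.prop.2.1, hmin.prop.2.2.1, hmin.prop.2.2.2,
    fun M' hM'M hM'ne hM'cl hM'inv =>
      hmin.eq_of_subset ⟨hM'M.trans hmin.prop.1, hM'ne, hM'cl, hM'inv⟩ hM'M⟩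

end InvariantSets

theorem stmt13_general
    (d : ℕ) (R : Matrix (Fin d) (Fin d) ℤ)
    (B L : Finset (Fin d → ℤ))
    (hB0 : (0 : Fin d → ℤ) ∈ B)
    (hHad : IsHadamardPair R B L)
    -- the attractor X_L of the dual IFS
    (XL : Set (Fin d → ℝ)) (hXLc : IsCompact XL) (hXLne : XL.Nonempty)
    (hXL : XL = ⋃ l ∈ L, tauL R l '' XL)
    -- a metric `dist'` generating the Euclidean topology making all τ_l strict
    -- contractions
    (dist' : (Fin d → ℝ) → (Fin d → ℝ) → ℝ)
    (hd0 : ∀ x y, dist' x y = 0 ↔ x = y)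
    (hdsymm : ∀ x y, dist' x y = dist' y x)
    (hdtri : ∀ x y z, dist' x z ≤ dist' x y + dist' y z)
    (hdtop : ∀ s : Set (Fin d → ℝ),
      IsOpen s ↔ ∀ x ∈ s, ∃ ε > 0, ∀ y, dist' x y < ε → y ∈ s)
    (hcontr : ∃ c, 0 ≤ c ∧ c < 1 ∧ ∀ l ∈ L, ∀ x y,
      dist' (tauL R l x) (tauL R l y) ≤ c * dist' x y) :
    -- (i)
    (∀ M : Set (Fin d → ℝ), LInvariant R B L M → LInvariant R B L (closure M)) ∧
    -- (ii)
    (∀ C : Set (Fin d → ℝ), IsLCycle R L C → BExtreme B C → LInvariant R B L C) ∧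
    -- (iii)
    (∀ M : Set (Fin d → ℝ), IsMinimalInv R B L M →
      (∀ x ∈ M, M = closure (orbitO R B L x)) ∧ M ⊆ XL) ∧
    -- (iv)
    ({M : Set (Fin d → ℝ) | IsMinimalInv R B L M}.Finite ∧
      (∀ M₁ M₂ : Set (Fin d → ℝ), IsMinimalInv R B L M₁ → IsMinimalInv R B L M₂ →
        M₁ ≠ M₂ → SepSets dist' M₁ M₂) ∧
      (∀ M : Set (Fin d → ℝ), M.Nonempty → IsClosed M → LInvariant R B L M →
        ∃ M', IsMinimalInv R B L M' ∧ (M ∩ M').Nonempty)) := by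
  obtain ⟨c, hc0, hc1, hτ⟩ := hcontr
  -- `ofDistTopology` keeps the existing topology, so the topological hypotheses carry over
  let _ : MetricSpace (Fin d → ℝ) := .ofDistTopology dist' (fun x => (hd0 x x).2 rfl) hdsymm
    hdtri hdtop fun x y => (hd0 x y).1
  have hXLτ : ∀ l ∈ L, MapsTo (tauL R l) XL XL := fun l hl x hx => by
    rw [hXL]
    exact mem_biUnion hl (mem_image_of_mem _ hx)
  have hXLinv : LInvariant R B L XL := fun x hx l hl _ => hXLτ l hl hx
  have hposs := hHad.exists_chiB_tauL_ne_zero hB0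
  have hmeet (M : Set (Fin d → ℝ)) (hne : M.Nonempty) (hM : IsClosed M)
      (hinv : LInvariant R B L M) : (M ∩ XL).Nonempty :=
    nonempty_inter_of_contracting hXLc hXLne hXLτ hc0 hc1 hτ hM hne fun x hx =>
      (hposs x).imp fun l ⟨hl, h⟩ => ⟨hl, hinv x hx l hl h⟩
  have hsub (M : Set (Fin d → ℝ)) (hM : IsMinimalInv R B L M) : M ⊆ XL :=
    hM.subset_of_inter_nonempty hXLc.isClosed hXLinv (hmeet M hM.1 hM.2.1 hM.2.2.1)
  obtain ⟨δ, hδ, hsep⟩ := exists_pos_le_dist_of_invariant hXLc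
    (isOpen_setOf_chiB_tauL_ne_zero R B) (fun x _ => hposs x) hc1 hτ
  have hsepMin (M₁ : Set (Fin d → ℝ)) (h₁ : IsMinimalInv R B L M₁) (M₂ : Set (Fin d → ℝ))
      (h₂ : IsMinimalInv R B L M₂) (hne : M₁ ≠ M₂) : ∀ x ∈ M₁, ∀ y ∈ M₂, δ ≤ dist' x y :=
    hsep M₁ M₂ (hXLc.of_isClosed_subset h₁.2.1 (hsub M₁ h₁))
      (hXLc.of_isClosed_subset h₂.2.1 (hsub M₂ h₂)) (hsub M₁ h₁) (h₁.disjoint h₂ hne)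
      h₁.2.2.1 h₂.2.2.1
  refine ⟨fun M hM => hM.closure, fun C hC hCB => hC.lInvariant hHad hB0 hCB,
    fun M hM => ⟨fun x hx => hM.eq_closure_orbitO hx, hsub M hM⟩,
    hXLc.finite_of_forall_le_dist (fun M hM => ⟨hM.1, hsub M hM⟩) hδ hsepMin,
    fun M₁ M₂ h₁ h₂ hne => ⟨δ, hδ, hsepMin M₁ h₁ M₂ h₂ hne⟩, fun M hne hM hinv => ?_⟩
  obtain ⟨M', hM'sub, hM'⟩ := exists_isMinimalInv_subset (hXLc.inter_left hM)
    (hmeet M hne hM hinv) (hinv.inter hXLinv)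
  obtain ⟨x, hx⟩ := hM'.1
  exact ⟨M', hM', x, (hM'sub hx).1, hx⟩

theorem stmt13
    (d N : ℕ) (R : Matrix (Fin d) (Fin d) ℤ) (hRexp : Expansive R)
    (B L : Finset (Fin d → ℤ))
    (hB0 : (0 : Fin d → ℤ) ∈ B) (hBcard : B.card = N)
    (hL0 : (0 : Fin d → ℤ) ∈ L) (hLcard : L.card = N)
    (hHad : IsHadamardPair R B L)
    -- the attractor X_L of the dual IFS
    (XL : Set (Fin d → ℝ)) (hXLc : IsCompact XL) (hXLne : XL.Nonempty)
    (hXL : XL = ⋃ l ∈ L, tauL R l '' XL)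
    -- a metric `dist'` generating the Euclidean topology making all τ_l strict
    -- contractions
    (dist' : (Fin d → ℝ) → (Fin d → ℝ) → ℝ)
    (hd0 : ∀ x y, dist' x y = 0 ↔ x = y)
    (hdsymm : ∀ x y, dist' x y = dist' y x)
    (hdtri : ∀ x y z, dist' x z ≤ dist' x y + dist' y z)
    (hdtop : ∀ s : Set (Fin d → ℝ),
      IsOpen s ↔ ∀ x ∈ s, ∃ ε > 0, ∀ y, dist' x y < ε → y ∈ s)
    (hcontr : ∃ c, 0 ≤ c ∧ c < 1 ∧ ∀ l ∈ L, ∀ x y,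
      dist' (tauL R l x) (tauL R l y) ≤ c * dist' x y) :
    -- (i)
    (∀ M : Set (Fin d → ℝ), LInvariant R B L M → LInvariant R B L (closure M)) ∧
    -- (ii)
    (∀ C : Set (Fin d → ℝ), IsLCycle R L C → BExtreme B C → LInvariant R B L C) ∧
    -- (iii)
    (∀ M : Set (Fin d → ℝ), IsMinimalInv R B L M →
      (∀ x ∈ M, M = closure (orbitO R B L x)) ∧ M ⊆ XL) ∧
    -- (iv)
    ({M : Set (Fin d → ℝ) | IsMinimalInv R B L M}.Finite ∧
      (∀ M₁ M₂ : Set (Fin d → ℝ), IsMinimalInv R B L M₁ → IsMinimalInv R B L M₂ →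
        M₁ ≠ M₂ → SepSets dist' M₁ M₂) ∧
      (∀ M : Set (Fin d → ℝ), M.Nonempty → IsClosed M → LInvariant R B L M →
        ∃ M', IsMinimalInv R B L M' ∧ (M ∩ M').Nonempty)) :=
  stmt13_general d R B L hB0 hHad XL hXLc hXLne hXL dist' hd0 hdsymm hdtri hdtop hcontr
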